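/- arXiv:1806.02108 — 2 statements merged into one kernel-verified Lean document; each statement's English description precedes it below -/
import Mathlib

section
/- Let C be a k-linear Hom-finite triangulated category with split idempotents, t an n-cluster tilting object, T = add(t), Γ = End_C(t), F = Hom_C(t,−). For every morphism κ : k → a in C with k ∈ T * ΣT, there exists a factorization κ = ι ∘ σ through an object m ∈ T * ΣT such that Fσ is surjective and Fι is injective; consequently Fm ≅ Im(Fκ) in mod(Γ). -/
/-
Write `kk` as an extension `x ⟶ kk ⟶ y ⟶ x⟦1⟧` with `x ∈ add t` and `y ∈ add t⟦1⟧`. As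
`Hom(t, t⟦1⟧) = 0`, the functor `Hom(t, -)` kills `add t⟦1⟧`. By finite dimensionality there is
`p : x' ⟶ x` with `x' ∈ add t` such that `Hom(t, p)` maps onto the kernel of `u ↦ u ≫ f ≫ κ`.
Let `m` be the cone of `[p, w] : x' ⊞ y⟦-1⟧ ⟶ x`, where `w` is the connecting morphism of the
extension; then `m ∈ add t * add t⟦1⟧`. The summand `y⟦-1⟧` makes `κ` factor as `σ ≫ ι` with
`f ≫ σ = q : x ⟶ m`. Every map `t ⟶ m` factors through `q`, hence through `σ` (surjectivity), and
if it is killed by `ι`, it comes from `x'` by the choice of `p`, hence vanishes (injectivity).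
-/

open CategoryTheory Category Limits Pretriangulated Opposite

universe v u

section Defs

variable {C : Type u} [Category.{v} C]

section Add

variable [Preadditive C] [HasFiniteBiproducts C]

/-- `x` lies in `add t`: it is a direct summand of a finite direct sum of copies of `t`. -/
def inAdd (t x : C) : Prop :=
  ∃ (n : ℕ) (i : x ⟶ ⨁ (fun _ : Fin n => t)) (r : ⨁ (fun _ : Fin n => t) ⟶ x),
    i ≫ r = 𝟙 x

end Add

/-- A morphism lies in the radical of the category. -/
def radMor [Preadditive C] {x y : C} (f : x ⟶ y) : Prop :=
  ∀ g : y ⟶ x, IsIso (𝟙 x - f ≫ g)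

/-- An object is indecomposable. -/
def IndecObj [Preadditive C] [HasBinaryBiproducts C] (s : C) : Prop :=
  ¬ IsZero s ∧ ∀ (a b : C), (s ≅ a ⊞ b) → IsZero a ∨ IsZero b

/-- Every object has a precover by an object of `Tset` (contravariant finiteness). -/
def IsPrecovering (Tset : Set C) : Prop :=
  ∀ c : C, ∃ (x : C) (f : x ⟶ c), x ∈ Tset ∧
    ∀ x' ∈ Tset, ∀ g : x' ⟶ c, ∃ h : x' ⟶ x, h ≫ f = g

/-- Every object has a preenvelope by an object of `Tset` (covariant finiteness). -/
def IsPreenveloping (Tset : Set C) : Prop :=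
  ∀ c : C, ∃ (x : C) (f : c ⟶ x), x ∈ Tset ∧
    ∀ x' ∈ Tset, ∀ g : c ⟶ x', ∃ h : x ⟶ x', f ≫ h = g

/-- `f : x ⟶ c` is a `Tset`-cover: a right minimal `Tset`-approximation. -/
def IsTCover (Tset : Set C) {x c : C} (f : x ⟶ c) : Prop :=
  x ∈ Tset ∧ (∀ x' ∈ Tset, ∀ g : x' ⟶ c, ∃ h : x' ⟶ x, h ≫ f = g) ∧
    ∀ φ : x ⟶ x, φ ≫ f = f → IsIso φ

section Shift

variable [Preadditive C] [HasShift C ℤ]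

/-- `Tset` is an `n`-cluster tilting subcategory: it is functorially finite and coincides with
both `Ext^{1..n-1}`-orthogonals of itself. -/
structure IsClusterTiltingSub (n : ℕ) (Tset : Set C) : Prop where
  precovering : IsPrecovering Tset
  preenveloping : IsPreenveloping Tset
  mem_iff_ext₁ : ∀ c : C, c ∈ Tset ↔
    ∀ i : ℕ, 1 ≤ i → i ≤ n - 1 → ∀ x ∈ Tset, ∀ f : x ⟶ c⟦(i : ℤ)⟧, f = 0
  mem_iff_ext₂ : ∀ c : C, c ∈ Tset ↔
    ∀ i : ℕ, 1 ≤ i → i ≤ n - 1 → ∀ x ∈ Tset, ∀ f : c ⟶ x⟦(i : ℤ)⟧, f = 0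

/-- `t` is an `n`-cluster tilting object: `add t` is an `n`-cluster tilting subcategory. -/
def IsClusterTiltingObj [HasFiniteBiproducts C] (n : ℕ) (t : C) : Prop :=
  IsClusterTiltingSub n {x : C | inAdd t x}

end Shift

section Tri

variable [Preadditive C] [HasZeroObject C] [HasShift C ℤ]
  [∀ n : ℤ, (shiftFunctor C n).Additive] [Pretriangulated C]

/-- The Iyama–Yoshino star operation `X * Y` on full subcategories. -/
def star (X Y : Set C) : Set C :=
  {c | ∃ (x y : C) (f : x ⟶ c) (g : c ⟶ y) (h : y ⟶ x⟦(1 : ℤ)⟧),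
    Triangle.mk f g h ∈ (distTriang C) ∧ x ∈ X ∧ y ∈ Y}

/-- Iterated star operation `X₁ * X₂ * ⋯ * Xₘ`. -/
def starList : List (Set C) → Set C
  | [] => {c | IsZero c}
  | [X] => X
  | X :: Y :: L => star X (starList (Y :: L))

/-- A tower of triangles connecting the objects `cobj (m+1), cobj m, …, cobj 1, cobj 0`:
triangles `w (i+1) ⟶ cobj (i+1) ⟶ w i ⟶ (w (i+1))⟦1⟧` for `i < m`, with
`w 0 = cobj 0` and `w m = cobj (m+1)`. -/
structure TriTower (m : ℕ) (cobj : ℕ → C) where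
  w : ℕ → C
  fmor : ∀ i : ℕ, w (i + 1) ⟶ cobj (i + 1)
  gmor : ∀ i : ℕ, cobj (i + 1) ⟶ w i
  hmor : ∀ i : ℕ, w i ⟶ (w (i + 1))⟦(1 : ℤ)⟧
  mem : ∀ i < m, Triangle.mk (fmor i) (gmor i) (hmor i) ∈ distTriang C
  w_zero : w 0 = cobj 0
  w_top : w m = cobj (m + 1)

/-- The composite `w 0 ⟶ Σʲ (w j)` of the (suitably shifted) wavy morphisms of a tower. -/
noncomputable def towerComp {m : ℕ} {cobj : ℕ → C} (tw : TriTower m cobj) :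
    ∀ j : ℕ, (tw.w 0 ⟶ (tw.w j)⟦(j : ℤ)⟧)
  | 0 => (shiftFunctorZero' C ((0 : ℕ) : ℤ) (by simp)).inv.app (tw.w 0)
  | (j + 1) => towerComp tw j ≫ (shiftFunctor C (j : ℤ)).map (tw.hmor j) ≫
      (shiftFunctorAdd' C (1 : ℤ) (j : ℤ) ((j + 1 : ℕ) : ℤ) (by push_cast; ring)).inv.app
        (tw.w (j + 1))

/-- The full composite `cobj 0 ⟶ Σᵐ (cobj (m+1))` of the wavy morphisms of a tower. -/
noncomputable def towerGamma {m : ℕ} {cobj : ℕ → C} (tw : TriTower m cobj) :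
    cobj 0 ⟶ (cobj (m + 1))⟦(m : ℤ)⟧ :=
  eqToHom tw.w_zero.symm ≫ towerComp tw m ≫ eqToHom (by rw [tw.w_top])

/-- `cls` is constant on isomorphism classes of objects of `Tset` and additive on biproducts
of objects of `Tset`; quantifying over all such `cls` encodes identities in the split
Grothendieck group `K₀^{sp}(Tset)`. -/
def IsAddOn [HasFiniteBiproducts C] (Tset : Set C) {G : Type*} [AddCommGroup G]
    (cls : C → G) : Prop :=
  (∀ x y : C, x ∈ Tset → y ∈ Tset → Nonempty (x ≅ y) → cls x = cls y) ∧
  (∀ x y : C, x ∈ Tset → y ∈ Tset → cls (x ⊞ y) = cls x + cls y)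

/-- `ind` is the triangulated index with respect to `Tset`: for each `c` there is a tower of
triangles built from `Tset`-covers, and `ind c` is the alternating sum of the classes of its
`Tset`-objects. -/
def IsIndex [HasFiniteBiproducts C] (n : ℕ) (Tset : Set C) {G : Type*} [AddCommGroup G]
    (cls ind : C → G) : Prop :=
  ∀ c : C, ∃ (cobj : ℕ → C) (tw : TriTower (n - 1) cobj),
    cobj 0 = c ∧ (∀ i < n - 1, IsTCover Tset (tw.gmor i)) ∧ cobj n ∈ Tset ∧
    ind c = ∑ i ∈ Finset.range n, ((-1 : ℤ) ^ i) • cls (cobj (i + 1))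

/-- `ind` is the `(d+2)`-angulated index with respect to `Tset`: for each `s ∈ Sset` there is a
`(d+2)`-angle (encoded as a tower of triangles) `t_d → ⋯ → t_0 → s → Σ^d t_d` with `t_i ∈ Tset`
and radical maps, and `ind s` is the alternating sum of the classes of the `t_i`. -/
def IsHigherIndex [HasFiniteBiproducts C] (d : ℕ) (Tset Sset : Set C) {G : Type*}
    [AddCommGroup G] (cls ind : C → G) : Prop :=
  ∀ s ∈ Sset, ∃ (cobj : ℕ → C) (tw : TriTower d cobj),
    cobj 0 = s ∧ (∀ i, 1 ≤ i → i ≤ d + 1 → cobj i ∈ Tset) ∧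
    (∀ j : ℕ, j + 2 ≤ d → radMor (tw.gmor (j + 1) ≫ tw.fmor j)) ∧
    (∀ j : ℕ, (hj : j + 1 = d) →
      radMor ((eqToHom (show cobj (d + 1) = tw.w (j + 1) by rw [hj, tw.w_top]) :
        cobj (d + 1) ⟶ tw.w (j + 1)) ≫ tw.fmor j)) ∧
    ind s = ∑ i ∈ Finset.range (d + 1), ((-1 : ℤ) ^ i) • cls (cobj (i + 1))

/-- `t` is an Oppermann–Thomas cluster tilting object of the `(d+2)`-angulated category `Sset`:
`Hom(t, Σ^d t) = 0`, and every `s ∈ Sset` admits a `(d+2)`-angle (encoded as a tower)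
`t_d → ⋯ → t_0 → s → Σ^d t_d` with all `t_i ∈ add t`. -/
def IsOTClusterTilting [HasFiniteBiproducts C] (d : ℕ) (Sset : Set C) (t : C) : Prop :=
  t ∈ Sset ∧ (∀ f : t ⟶ t⟦(d : ℤ)⟧, f = 0) ∧
    ∀ s ∈ Sset, ∃ (cobj : ℕ → C) (tw : TriTower d cobj),
      cobj 0 = s ∧ ∀ i, 1 ≤ i → i ≤ d + 1 → inAdd t (cobj i)

/-- A `N`-Calabi–Yau structure on `Sset`: a bifunctorial perfect pairing
`Hom(x,y) × Hom(y, x⟦N⟧) → k`, encoding natural isomorphisms `Hom(x,y) ≅ D Hom(y, x⟦N⟧)`. -/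
structure CYData (k : Type*) [Field k] [Linear k C] (Sset : Set C) (N : ℤ) where
  pair : ∀ x y : C, (x ⟶ y) → (y ⟶ x⟦N⟧) → k
  add_left : ∀ x y, x ∈ Sset → y ∈ Sset → ∀ (f f' : x ⟶ y) (g : y ⟶ x⟦N⟧),
    pair x y (f + f') g = pair x y f g + pair x y f' g
  add_right : ∀ x y, x ∈ Sset → y ∈ Sset → ∀ (f : x ⟶ y) (g g' : y ⟶ x⟦N⟧),
    pair x y f (g + g') = pair x y f g + pair x y f g'
  smul_left : ∀ x y, x ∈ Sset → y ∈ Sset → ∀ (a : k) (f : x ⟶ y) (g : y ⟶ x⟦N⟧),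
    pair x y (a • f) g = a * pair x y f g
  smul_right : ∀ x y, x ∈ Sset → y ∈ Sset → ∀ (a : k) (f : x ⟶ y) (g : y ⟶ x⟦N⟧),
    pair x y f (a • g) = a * pair x y f g
  assoc : ∀ x y z, x ∈ Sset → y ∈ Sset → z ∈ Sset →
    ∀ (f : x ⟶ y) (g : y ⟶ z) (h : z ⟶ x⟦N⟧),
    pair x z (f ≫ g) h = pair x y f (g ≫ h)
  nondeg_left : ∀ x y, x ∈ Sset → y ∈ Sset → ∀ f : x ⟶ y,
    (∀ g : y ⟶ x⟦N⟧, pair x y f g = 0) → f = 0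
  nondeg_right : ∀ x y, x ∈ Sset → y ∈ Sset → ∀ g : y ⟶ x⟦N⟧,
    (∀ f : x ⟶ y, pair x y f g = 0) → g = 0

end Tri

end Defs

variable {C : Type u} [Category.{v} C]

section AddClosure

variable [Preadditive C] [HasFiniteBiproducts C]

lemma inAdd.of_retract {t z w : C} (hw : inAdd t w) (e : Retract z w) : inAdd t z := by
  obtain ⟨n, i, r, hir⟩ := hw
  exact ⟨n, e.i ≫ i, r ≫ e.r, by simp [reassoc_of% hir]⟩

lemma inAdd_biproduct_const (t : C) (J : Type) [Fintype J] : inAdd t (⨁ fun _ : J => t) :=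
  let e := biproduct.whiskerEquiv (Fintype.equivFin J) fun _ => Iso.refl t
  ⟨Fintype.card J, e.hom, e.inv, e.hom_inv_id⟩

lemma inAdd_self (t : C) : inAdd t t :=
  (inAdd_biproduct_const t Unit).of_retract ((biproduct.bicone fun _ : Unit => t).retract ())

noncomputable def retractBiprodBiproductSum [HasBinaryBiproducts C] (t : C) (J K : Type)
    [Finite J] [Finite K] :
    Retract ((⨁ fun _ : J => t) ⊞ (⨁ fun _ : K => t)) (⨁ fun _ : J ⊕ K => t) where
  i := biprod.desc (biproduct.desc fun j => biproduct.ι (fun _ : J ⊕ K => t) (Sum.inl j))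
    (biproduct.desc fun j => biproduct.ι (fun _ : J ⊕ K => t) (Sum.inr j))
  r := biproduct.desc (Sum.elim (fun j => biproduct.ι (fun _ : J => t) j ≫ biprod.inl)
    fun j => biproduct.ι (fun _ : K => t) j ≫ biprod.inr)
  retract := by ext <;> simp

lemma inAdd.biprod [HasBinaryBiproducts C] {t z₁ z₂ : C} (h₁ : inAdd t z₁) (h₂ : inAdd t z₂) :
    inAdd t (z₁ ⊞ z₂) := by
  obtain ⟨n₁, i₁, r₁, hir₁⟩ := h₁
  obtain ⟨n₂, i₂, r₂, hir₂⟩ := h₂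
  let e : Retract (z₁ ⊞ z₂) (_ ⊞ _) :=
    { i := biprod.map i₁ i₂, r := biprod.map r₁ r₂, retract := by ext <;> simp [hir₁, hir₂] }
  exact (inAdd_biproduct_const t _).of_retract (e.trans (retractBiprodBiproductSum t _ _))

lemma inAdd.of_iso_left {t t' z : C} (h : inAdd t z) (e : t ≅ t') : inAdd t' z := by
  obtain ⟨n, i, r, hir⟩ := h
  let E := biproduct.mapIso fun _ : Fin n => e
  exact ⟨n, i ≫ E.hom, E.inv ≫ r, by simp [hir]⟩

lemma inAdd.map {D : Type*} [Category D] [Preadditive D] [HasFiniteBiproducts D]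
    (F : C ⥤ D) [F.Additive] {t z : C} (h : inAdd t z) : inAdd (F.obj t) (F.obj z) := by
  obtain ⟨n, i, r, hir⟩ := h
  let E := F.mapBiproduct fun _ : Fin n => t
  exact ⟨n, F.map i ≫ E.hom, E.inv ≫ F.map r, by simp [← F.map_comp, hir]⟩

lemma inAdd.hom_eq_zero {s t z : C} (hz : inAdd t z) (hst : ∀ f : s ⟶ t, f = 0)
    (g : s ⟶ z) : g = 0 := by
  obtain ⟨n, i, r, hir⟩ := hz
  have hgi : g ≫ i = 0 := biproduct.hom_ext _ _ fun j => by simpa using hst _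
  rw [← Category.comp_id g, ← hir, ← Category.assoc, hgi, zero_comp]

end AddClosure

lemma IsClusterTiltingObj.hom_shift_one_eq_zero [Preadditive C] [HasShift C ℤ]
    [HasFiniteBiproducts C] {n : ℕ} {t : C} (ht : IsClusterTiltingObj n t) (hn : 2 ≤ n)
    (f : t ⟶ t⟦(1 : ℤ)⟧) : f = 0 := by
  simpa using (ht.mem_iff_ext₁ t).mp (inAdd_self t) 1 le_rfl (by omega) t (inAdd_self t) f

lemma exists_inAdd_approximation_ker (k : Type*) [Field k] [Preadditive C]
    [HasFiniteBiproducts C] [Linear k C] (t : C) {x a : C} [FiniteDimensional k (t ⟶ x)]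
    (φ : x ⟶ a) :
    ∃ (x' : C) (p : x' ⟶ x), inAdd t x' ∧ p ≫ φ = 0 ∧
      ∀ u : t ⟶ x, u ≫ φ = 0 → ∃ l : t ⟶ x', l ≫ p = u := by
  obtain ⟨r, s, hs⟩ := Submodule.fg_iff_exists_fin_generating_family.mp
    (IsNoetherian.noetherian (LinearMap.ker (Linear.rightComp k t φ)))
  have hs_ker (j : Fin r) : s j ≫ φ = 0 :=
    LinearMap.mem_ker.mp (hs ▸ Submodule.subset_span (Set.mem_range_self j))
  refine ⟨⨁ fun _ : Fin r => t, biproduct.desc s, inAdd_biproduct_const t _,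
    biproduct.hom_ext' _ _ fun j => by simp [hs_ker], fun u hu => ?_⟩
  obtain ⟨c, hc⟩ := Submodule.mem_span_range_iff_exists_fun k |>.mp
    (hs.symm ▸ hu : u ∈ Submodule.span k (Set.range s))
  exact ⟨∑ j, c j • biproduct.ι (fun _ : Fin r => t) j, by simp [Preadditive.sum_comp, hc]⟩

section Triangulated

variable [Preadditive C] [HasZeroObject C] [HasShift C ℤ]
  [∀ n : ℤ, (shiftFunctor C n).Additive] [Pretriangulated C]

/-- `σ` extends `(e.i, 𝟙 x)` to a morphism of triangles out of the inverse rotation of `(f, g, h)`.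
A first factorization `f ≫ κ = q ≫ ι₀` leaves an error `κ - σ ≫ ι₀ = g ≫ v`, which the retraction
`e.r` lets us absorb into `ι` through `r`. -/
lemma exists_factorization_through_cone {x kk y x'' m a : C} {f : x ⟶ kk} {g : kk ⟶ y}
    {h : y ⟶ x⟦(1 : ℤ)⟧} (hT : Triangle.mk f g h ∈ distTriang C) {p : x'' ⟶ x} {q : x ⟶ m}
    {r : m ⟶ x''⟦(1 : ℤ)⟧} (hT' : Triangle.mk p q r ∈ distTriang C) (κ : kk ⟶ a)
    (hp : p ≫ f ≫ κ = 0) (e : Retract (y⟦(-1 : ℤ)⟧) x'')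
    (he : e.i ≫ p = (Triangle.mk f g h).invRotate.mor₁) :
    ∃ (σ : kk ⟶ m) (ι : m ⟶ a), f ≫ σ = q ∧ σ ≫ ι = κ := by
  obtain ⟨σ, hfσ, hσr⟩ : ∃ σ : kk ⟶ m, f ≫ σ = q ∧
      (g ≫ (shiftFunctorCompIsoId C (-1 : ℤ) 1 (by norm_num)).inv.app y) ≫ e.i⟦(1 : ℤ)⟧' =
        σ ≫ r := by
    obtain ⟨σ, hfσ, hσr⟩ := Pretriangulated.complete_distinguished_triangle_morphism _ _
      (inv_rot_of_distTriang _ hT) hT' e.i (𝟙 x) ((Category.comp_id _).trans he.symm)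
    exact ⟨σ, hfσ.trans (Category.id_comp _), hσr⟩
  obtain ⟨ι₀, hι₀⟩ : ∃ ι₀ : m ⟶ a, f ≫ κ = q ≫ ι₀ := Triangle.yoneda_exact₂ _ hT' (f ≫ κ) hp
  obtain ⟨v, hv⟩ : ∃ v : y ⟶ a, κ - σ ≫ ι₀ = g ≫ v := Triangle.yoneda_exact₂ _ hT _ <| by
    change f ≫ (κ - σ ≫ ι₀) = 0
    rw [Preadditive.comp_sub, reassoc_of% hfσ, ← hι₀, sub_self]
  refine ⟨σ, ι₀ + r ≫ e.r⟦(1 : ℤ)⟧' ≫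
    (shiftFunctorCompIsoId C (-1 : ℤ) 1 (by norm_num)).hom.app y ≫ v, hfσ, ?_⟩
  rw [Preadditive.comp_add, reassoc_of% hσr.symm, ← Functor.map_comp_assoc, e.retract,
    CategoryTheory.Functor.map_id, Category.id_comp, Iso.inv_hom_id_app_assoc, ← hv,
    add_sub_cancel]

theorem exists_factorization_of_hom_shift_one_eq_zero (k : Type*) [Field k] [Linear k C]
    [HasFiniteBiproducts C] [∀ X Y : C, FiniteDimensional k (X ⟶ Y)]
    {t : C} (ht : ∀ f : t ⟶ t⟦(1 : ℤ)⟧, f = 0) {kk a : C}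
    (hk : kk ∈ star {x : C | inAdd t x} {x : C | inAdd (t⟦(1 : ℤ)⟧) x}) (κ : kk ⟶ a) :
    ∃ (m : C) (σ : kk ⟶ m) (ι : m ⟶ a),
      m ∈ star {x : C | inAdd t x} {x : C | inAdd (t⟦(1 : ℤ)⟧) x} ∧ σ ≫ ι = κ ∧
      Function.Surjective (fun g : t ⟶ kk => g ≫ σ) ∧
      Function.Injective (fun h : t ⟶ m => h ≫ ι) := by
  obtain ⟨x, y, f, g, h, hT, hx, hy⟩ := hk
  obtain ⟨x', p, hx', hp, hker⟩ := exists_inAdd_approximation_ker k t (f ≫ κ)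
  have hy' : inAdd t (y⟦(-1 : ℤ)⟧) :=
    (hy.map (shiftFunctor C (-1))).of_iso_left
      ((shiftFunctorCompIsoId C 1 (-1) (by norm_num)).app t)
  let w : y⟦(-1 : ℤ)⟧ ⟶ x := (Triangle.mk f g h).invRotate.mor₁
  have hw : w ≫ f = 0 := comp_distTriang_mor_zero₁₂ _ (inv_rot_of_distTriang _ hT)
  obtain ⟨m, q, r, hT'⟩ := distinguished_cocone_triangle (biprod.desc p w)
  have hpκ : biprod.desc p w ≫ f ≫ κ = 0 := by
    ext
    · simp [hp]
    · simp [reassoc_of% hw]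
  obtain ⟨σ, ι, hfσ, hσι⟩ := exists_factorization_through_cone hT hT' κ hpκ
    ⟨biprod.inr, biprod.snd, by simp⟩ (biprod.inr_desc p w)
  have hx'' := (hx'.biprod hy').map (shiftFunctor C (1 : ℤ))
  have hfac (u : t ⟶ m) : ∃ v : t ⟶ x, u = v ≫ q :=
    Triangle.coyoneda_exact₃ _ hT' u (hx''.hom_eq_zero ht _)
  refine ⟨m, σ, ι, ⟨x, _, q, r, _, rot_of_distTriang _ hT', hx, hx''⟩, hσι, fun u => ?_,
    (injective_iff_map_eq_zero (Preadditive.rightComp t ι)).mpr fun u (hu : u ≫ ι = 0) => ?_⟩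
  · obtain ⟨v, rfl⟩ := hfac u
    exact ⟨v ≫ f, by simp [hfσ]⟩
  · obtain ⟨v, rfl⟩ := hfac u
    obtain ⟨l, rfl⟩ := hker v (by simpa [← hfσ, hσι] using hu)
    have hpq : biprod.desc p w ≫ q = 0 := comp_distTriang_mor_zero₁₂ _ hT'
    simpa using (l ≫ biprod.inl) ≫= hpq

end Triangulated

theorem stmt3 (k : Type*) [Field k] [Preadditive C] [CategoryTheory.Linear k C] [HasZeroObject C]
    [HasShift C ℤ] [∀ n : ℤ, (shiftFunctor C n).Additive] [Pretriangulated C]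
    [HasFiniteBiproducts C] [IsIdempotentComplete C]
    [∀ X Y : C, FiniteDimensional k (X ⟶ Y)]
    (n : ℕ) (hn : 2 ≤ n) (t : C) (ht : IsClusterTiltingObj n t)
    (kk a : C) (hk : kk ∈ star {x : C | inAdd t x} {x : C | inAdd (t⟦(1 : ℤ)⟧) x}) (κ : kk ⟶ a) :
    ∃ (m : C) (σ : kk ⟶ m) (ι : m ⟶ a),
      m ∈ star {x : C | inAdd t x} {x : C | inAdd (t⟦(1 : ℤ)⟧) x} ∧ σ ≫ ι = κ ∧
      Function.Surjective (fun g : t ⟶ kk => g ≫ σ) ∧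
      Function.Injective (fun h : t ⟶ m => h ≫ ι) ∧
      Set.range (fun h : t ⟶ m => h ≫ ι) = Set.range (fun g : t ⟶ kk => g ≫ κ) := by
  obtain ⟨m, σ, ι, hm, hσι, hsurj, hinj⟩ :=
    exists_factorization_of_hom_shift_one_eq_zero k (ht.hom_shift_one_eq_zero hn) hk κ
  have hκ : (fun g : t ⟶ kk => g ≫ κ) = (fun h => h ≫ ι) ∘ (fun g => g ≫ σ) := by
    ext g
    simp [← hσι]
  exact ⟨m, σ, ι, hm, hσι, hsurj, hinj, by rw [hκ, hsurj.range_comp]⟩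
end

section
/- With C, t, T, index_T as above: index_T(c ⊕ c') = index_T(c) + index_T(c') for all c, c' ∈ C. -/
open CategoryTheory Category Limits Pretriangulated Opposite

universe v u

/-!
The index does not depend on the tower used to compute it. The key point is a Schanuel lemma for
triangles: if `w ⟶ x ⟶ z` and `v ⟶ y ⟶ z` extend to distinguished triangles and `x ⟶ z`,
`y ⟶ z` are `T`-precovers, then each map factors through the other, and comparing both with the
fibre of `[f g] : x ⊞ y ⟶ z` gives `w ⊞ y ≅ v ⊞ x`. Adding trivial towers on `y` and on `x` to the
remaining parts of the two towers therefore produces towers with isomorphic bases, and induction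
on the length shows that the alternating sums agree. Since the direct sum of towers of
`T`-precovers for `c` and `c'` is such a tower for `c ⊞ c'`, the index is additive.
-/

open ZeroObject

section AddT

variable {C : Type u} [Category.{v} C] [Preadditive C] [HasFiniteBiproducts C] {t : C}

lemma inAdd_of_isZero {x : C} (hx : IsZero x) : inAdd t x :=
  ⟨0, 0, 0, hx.eq_of_src _ _⟩

variable [HasBinaryBiproducts C]

lemma exists_retraction_biprod_finBiproduct (n m : ℕ) :
    ∃ (i : (⨁ fun _ : Fin n => t) ⊞ (⨁ fun _ : Fin m => t) ⟶ ⨁ fun _ : Fin (n + m) => t)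
      (r : (⨁ fun _ : Fin (n + m) => t) ⟶ (⨁ fun _ : Fin n => t) ⊞ (⨁ fun _ : Fin m => t)),
      i ≫ r = 𝟙 _ := by
  refine ⟨biprod.desc (biproduct.desc fun k => biproduct.ι (fun _ => t) (Fin.castAdd m k))
      (biproduct.desc fun k => biproduct.ι (fun _ => t) (Fin.natAdd n k)),
    biproduct.desc (Fin.addCases (fun k => biproduct.ι (fun _ : Fin n => t) k ≫ biprod.inl)
      (fun k => biproduct.ι (fun _ : Fin m => t) k ≫ biprod.inr)), ?_⟩
  apply biprod.hom_ext' <;> apply biproduct.hom_ext' <;> intro k <;> simp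

lemma inAdd_biprod {x y : C} (hx : inAdd t x) (hy : inAdd t y) : inAdd t (x ⊞ y) := by
  obtain ⟨n, i, r, hir⟩ := hx
  obtain ⟨m, j, s, hjs⟩ := hy
  obtain ⟨i', r', hir'⟩ := exists_retraction_biprod_finBiproduct (t := t) n m
  refine ⟨n + m, biprod.map i j ≫ i', r' ≫ biprod.map r s, ?_⟩
  apply biprod.hom_ext <;> simp [reassoc_of% hir', hir, hjs]

end AddT

section Precover

variable {C : Type u} [Category.{v} C] {T : Set C}

def IsPrecover (T : Set C) {x c : C} (f : x ⟶ c) : Prop :=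
  x ∈ T ∧ ∀ x' ∈ T, ∀ g : x' ⟶ c, ∃ h : x' ⟶ x, h ≫ f = g

lemma IsTCover.isPrecover {x c : C} {f : x ⟶ c} (hf : IsTCover T f) : IsPrecover T f :=
  ⟨hf.1, hf.2.1⟩

lemma isPrecover_id {x : C} (hx : x ∈ T) : IsPrecover T (𝟙 x) :=
  ⟨hx, fun _ _ g => ⟨g, comp_id g⟩⟩

lemma isPrecover_of_isZero [HasZeroMorphisms C] {x c : C} (hx : x ∈ T) (hc : IsZero c)
    (f : x ⟶ c) : IsPrecover T f :=
  ⟨hx, fun _ _ _ => ⟨0, hc.eq_of_tgt _ _⟩⟩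

lemma IsPrecover.biprod_map [HasZeroMorphisms C] [HasBinaryBiproducts C]
    (hT : ∀ x y, x ∈ T → y ∈ T → (x ⊞ y) ∈ T) {x c y d : C} {f : x ⟶ c} {g : y ⟶ d}
    (hf : IsPrecover T f) (hg : IsPrecover T g) : IsPrecover T (biprod.map f g) := by
  refine ⟨hT _ _ hf.1 hg.1, fun x' hx' k => ?_⟩
  obtain ⟨k₁, hk₁⟩ := hf.2 x' hx' (k ≫ biprod.fst)
  obtain ⟨k₂, hk₂⟩ := hg.2 x' hx' (k ≫ biprod.snd)
  exact ⟨biprod.lift k₁ k₂, by apply biprod.hom_ext <;> simp [hk₁, hk₂]⟩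

end Precover

section AltSum

variable {C : Type u} {G : Type*} [AddCommGroup G] (cls : C → G)

/-- `cobj 0` does not contribute: it is the object resolved by a tower with objects `cobj`. -/
def altSum (L : ℕ) (cobj : ℕ → C) : G :=
  ∑ i ∈ Finset.range (L + 1), (-1 : ℤ) ^ i • cls (cobj (i + 1))

lemma altSum_succ (L : ℕ) (cobj : ℕ → C) :
    altSum cls (L + 1) cobj = cls (cobj 1) - altSum cls L (fun j => cobj (j + 1)) := by
  rw [altSum, altSum, Finset.sum_range_succ', sub_eq_neg_add, ← Finset.sum_neg_distrib]
  simp [pow_succ]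

noncomputable def singleObj [Category.{v} C] [HasZeroObject C] (s : C) : ℕ → C
  | 0 | 1 => s
  | _ + 2 => 0

lemma altSum_singleObj [Category.{v} C] [HasZeroObject C] {cls : C → G} (hcls : cls 0 = 0)
    (L : ℕ) (s : C) : altSum cls L (singleObj s) = cls s := by
  rw [altSum, Finset.sum_eq_single 0]
  · simp [singleObj]
  · rintro (_ | b) _ hb
    · exact absurd rfl hb
    · simp [singleObj, hcls]
  · simp

end AltSum

section BiprodPi

variable {C : Type u} [Category.{v} C] [HasZeroMorphisms C] [HasBinaryBiproducts C]

noncomputable def biprodIsoPiBool (X : Bool → C) [HasProduct X] : X true ⊞ X false ≅ ∏ᶜ X where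
  hom := Pi.lift fun b => Bool.rec biprod.snd biprod.fst b
  inv := biprod.lift (Pi.π X true) (Pi.π X false)
  hom_inv_id := by apply biprod.hom_ext <;> simp
  inv_hom_id := by
    apply limit.hom_ext
    rintro ⟨_ | _⟩ <;> simp

end BiprodPi

section Triangulated

variable {C : Type u} [Category.{v} C] [Preadditive C] [HasZeroObject C] [HasShift C ℤ]
  [∀ n : ℤ, (shiftFunctor C n).Additive] [Pretriangulated C]

noncomputable def biprodTriangle (T T' : Triangle C) : Triangle C :=
  Triangle.mk (biprod.map T.mor₁ T'.mor₁) (biprod.map T.mor₂ T'.mor₂)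
    (biprod.desc (T.mor₃ ≫ (biprod.inl : T.obj₁ ⟶ _)⟦(1 : ℤ)⟧')
      (T'.mor₃ ≫ (biprod.inr : T'.obj₁ ⟶ _)⟦(1 : ℤ)⟧'))

noncomputable def biprodTriangleIsoProductTriangle (T : Bool → Triangle C) :
    biprodTriangle (T true) (T false) ≅ productTriangle T := by
  refine Triangle.isoMk _ _ (biprodIsoPiBool fun b => (T b).obj₁)
    (biprodIsoPiBool fun b => (T b).obj₂) (biprodIsoPiBool fun b => (T b).obj₃) ?_ ?_ ?_ <;>
    dsimp only [biprodTriangle, productTriangle, Triangle.mk]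
  · apply Pi.hom_ext
    rintro (_ | _) <;> simp [biprodIsoPiBool]
  · apply Pi.hom_ext
    rintro (_ | _) <;> simp [biprodIsoPiBool]
  · rw [← cancel_mono (piComparison (shiftFunctor C (1 : ℤ)) fun b => (T b).obj₁)]
    apply Pi.hom_ext
    rintro (_ | _) <;> apply biprod.hom_ext' <;> simp [biprodIsoPiBool, ← Functor.map_comp]

lemma biprodTriangle_distinguished {T T' : Triangle C} (hT : T ∈ distTriang C)
    (hT' : T' ∈ distTriang C) : biprodTriangle T T' ∈ distTriang C :=
  isomorphic_distinguished _
    (productTriangle_distinguished (fun b => bif b then T else T') (by rintro (_ | _) <;> assumption))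
    _ (biprodTriangleIsoProductTriangle fun b => bif b then T else T')

lemma nonempty_iso_obj₁_of_iso₂₃ {T T' : Triangle C} (hT : T ∈ distTriang C)
    (hT' : T' ∈ distTriang C) (e₂ : T.obj₂ ≅ T'.obj₂) (e₃ : T.obj₃ ≅ T'.obj₃)
    (comm : T.mor₂ ≫ e₃.hom = e₂.hom ≫ T'.mor₂) : Nonempty (T.obj₁ ≅ T'.obj₁) := by
  obtain ⟨a, ha₁, ha₂⟩ := complete_distinguished_triangle_morphism₁ T T' hT hT' e₂.hom e₃.hom comm
  let φ : T ⟶ T' := ⟨a, e₂.hom, e₃.hom, ha₁, comm, ha₂⟩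
  have := isIso₁_of_isIso₂₃ φ hT hT' (inferInstanceAs (IsIso e₂.hom))
    (inferInstanceAs (IsIso e₃.hom))
  exact ⟨asIso φ.hom₁⟩

/-- The automorphism `(1 0; -p 1)` of `x ⊞ y` turns `biprod.desc f g` into `biprod.fst ≫ f`. -/
lemma nonempty_iso_of_distTriang_biprod_desc {w x y z z' : C} {a : w ⟶ x} {f : x ⟶ z}
    {h : z ⟶ w⟦(1 : ℤ)⟧} (hT : Triangle.mk a f h ∈ distTriang C) {g : y ⟶ z} (p : y ⟶ x)
    (hp : p ≫ f = g) {e₁ : z' ⟶ x ⊞ y} {e₃ : z ⟶ z'⟦(1 : ℤ)⟧}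
    (hE : Triangle.mk e₁ (biprod.desc f g) e₃ ∈ distTriang C) : Nonempty (w ⊞ y ≅ z') :=
  nonempty_iso_obj₁_of_iso₂₃
    (biprodTriangle_distinguished hT (contractible_distinguished y)) hE
    (Biprod.unipotentLower (-p)) (isoBiprodZero (isZero_zero C)).symm (by
      dsimp only [biprodTriangle, contractibleTriangle, Triangle.mk]
      apply biprod.hom_ext' <;> simp [Biprod.ofComponents, isoBiprodZero, hp])

lemma nonempty_iso_biprod_of_factors {w x v y z : C} {a : w ⟶ x} {f : x ⟶ z}
    {h : z ⟶ w⟦(1 : ℤ)⟧} (hT : Triangle.mk a f h ∈ distTriang C) {a' : v ⟶ y} {g : y ⟶ z}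
    {h' : z ⟶ v⟦(1 : ℤ)⟧} (hU : Triangle.mk a' g h' ∈ distTriang C)
    (p : y ⟶ x) (hp : p ≫ f = g) (q : x ⟶ y) (hq : q ≫ g = f) :
    Nonempty (w ⊞ y ≅ v ⊞ x) := by
  obtain ⟨z', e₁, e₃, hE⟩ := distinguished_cocone_triangle₁ (biprod.desc f g)
  have hE' : Triangle.mk (e₁ ≫ (biprod.braiding x y).hom) (biprod.desc g f) e₃ ∈
      distTriang C := by
    refine isomorphic_distinguished _ hE _ <| Triangle.isoMk _ _ (Iso.refl _)
      (biprod.braiding x y).symm (Iso.refl _) ?_ ?_ ?_ <;> dsimp only [Triangle.mk]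
    · simp
    · apply biprod.hom_ext' <;> simp
    · simp
  obtain ⟨i⟩ := nonempty_iso_of_distTriang_biprod_desc hT p hp hE
  obtain ⟨i'⟩ := nonempty_iso_of_distTriang_biprod_desc hU q hq hE'
  exact ⟨i ≪≫ i'.symm⟩

lemma nonempty_iso_biprod_of_isPrecover {T : Set C} {w x v y z z' : C} {a : w ⟶ x}
    {f : x ⟶ z} {h : z ⟶ w⟦(1 : ℤ)⟧} (hT : Triangle.mk a f h ∈ distTriang C) {a' : v ⟶ y}
    {g : y ⟶ z'} {h' : z' ⟶ v⟦(1 : ℤ)⟧} (hU : Triangle.mk a' g h' ∈ distTriang C)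
    (hf : IsPrecover T f) (hg : IsPrecover T g) (e : z ≅ z') : Nonempty (w ⊞ y ≅ v ⊞ x) := by
  obtain ⟨p, hp⟩ := hf.2 _ hg.1 (g ≫ e.inv)
  obtain ⟨q, hq⟩ := hg.2 _ hf.1 (f ≫ e.hom)
  have hU' : Triangle.mk a' (g ≫ e.inv) (e.hom ≫ h') ∈ distTriang C :=
    isomorphic_distinguished _ hU _ <| Triangle.isoMk _ _ (Iso.refl _) (Iso.refl _) e
      (by dsimp only [Triangle.mk]; simp) (by dsimp only [Triangle.mk]; simp)
      (by dsimp only [Triangle.mk]; simp)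
  exact nonempty_iso_biprod_of_factors hT hU' p hp q (by simp [reassoc_of% hq])

namespace TriTower

variable {T : Set C} {L : ℕ} {cobj : ℕ → C}

structure IsPrecoverTower (T : Set C) (tw : TriTower L cobj) : Prop where
  isPrecover : ∀ i < L, IsPrecover T (tw.gmor i)
  top_mem : cobj (L + 1) ∈ T

lemma IsPrecoverTower.mem {tw : TriTower L cobj} (h : tw.IsPrecoverTower T) {j : ℕ}
    (hj₁ : 1 ≤ j) (hj₂ : j ≤ L + 1) : cobj j ∈ T := by
  obtain ⟨i, rfl⟩ : ∃ i, j = i + 1 := ⟨j - 1, by omega⟩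
  rcases hj₂.eq_or_lt with hi | hi
  · exact hi ▸ h.top_mem
  · exact (h.isPrecover i (by omega)).1

def tailObj (W : C) (cobj : ℕ → C) : ℕ → C
  | 0 => W
  | j + 1 => cobj (j + 2)

def tail (tw : TriTower (L + 1) cobj) : TriTower L (tailObj (tw.w 1) cobj) where
  w i := tw.w (i + 1)
  fmor i := tw.fmor (i + 1)
  gmor i := tw.gmor (i + 1)
  hmor i := tw.hmor (i + 1)
  mem i hi := tw.mem (i + 1) (by omega)
  w_zero := rfl
  w_top := tw.w_top

lemma IsPrecoverTower.tail {tw : TriTower (L + 1) cobj} (h : tw.IsPrecoverTower T) :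
    tw.tail.IsPrecoverTower T :=
  ⟨fun i hi => h.isPrecover (i + 1) (by omega), h.top_mem⟩

noncomputable def single (L : ℕ) (s : C) : TriTower L (singleObj s) where
  w
    | 0 => s
    | _ + 1 => 0
  fmor _ := 0
  gmor
    | 0 => 𝟙 s
    | _ + 1 => 0
  hmor _ := 0
  mem
    | 0, _ => contractible_distinguished₁ s
    | _ + 1, _ => by
      rw [Triangle.distinguished_iff_of_isZero₁ _ (isZero_zero C)]
      exact isIso_of_source_target_iso_zero _ (isZero_zero C).isoZero (isZero_zero C).isoZero
  w_zero := rfl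
  w_top := by cases L <;> rfl

lemma isPrecoverTower_single (L : ℕ) {s : C} (hT0 : (0 : C) ∈ T) (hs : s ∈ T) :
    (single L s).IsPrecoverTower T := by
  refine ⟨fun i _ => ?_, ?_⟩
  · rcases i with _ | i
    · exact isPrecover_id hs
    · exact isPrecover_of_isZero hT0 (isZero_zero C) _
  · rcases L with _ | L
    exacts [hs, hT0]

noncomputable def biprod {ca cb : ℕ → C} (A : TriTower L ca) (B : TriTower L cb) :
    TriTower L (fun j => ca j ⊞ cb j) where
  w i := A.w i ⊞ B.w i
  fmor i := biprod.map (A.fmor i) (B.fmor i)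
  gmor i := biprod.map (A.gmor i) (B.gmor i)
  hmor i := biprod.desc (A.hmor i ≫ (biprod.inl : A.w (i + 1) ⟶ _)⟦(1 : ℤ)⟧')
    (B.hmor i ≫ (biprod.inr : B.w (i + 1) ⟶ _)⟦(1 : ℤ)⟧')
  mem i hi := biprodTriangle_distinguished (A.mem i hi) (B.mem i hi)
  w_zero := by rw [A.w_zero, B.w_zero]
  w_top := by rw [A.w_top, B.w_top]

lemma IsPrecoverTower.biprod (hT : ∀ x y, x ∈ T → y ∈ T → (x ⊞ y) ∈ T) {ca cb : ℕ → C}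
    {A : TriTower L ca} {B : TriTower L cb} (hA : A.IsPrecoverTower T)
    (hB : B.IsPrecoverTower T) : (A.biprod B).IsPrecoverTower T :=
  ⟨fun i hi => (hA.isPrecover i hi).biprod_map hT (hB.isPrecover i hi),
    hT _ _ hA.top_mem hB.top_mem⟩

end TriTower

open TriTower

variable [HasFiniteBiproducts C] {T : Set C} {G : Type*} [AddCommGroup G] {cls : C → G}

lemma IsAddOn.map_zero (hcls : IsAddOn T cls) (hT0 : (0 : C) ∈ T)
    (hT : ∀ x y, x ∈ T → y ∈ T → (x ⊞ y) ∈ T) : cls 0 = 0 := by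
  have h00 : IsZero ((0 : C) ⊞ 0) := by simp [isZero_zero]
  have := hcls.1 _ _ (hT _ _ hT0 hT0) hT0 ⟨h00.iso (isZero_zero C)⟩
  rw [hcls.2 _ _ hT0 hT0] at this
  exact left_eq_add.mp this.symm

lemma altSum_biprod (hcls : IsAddOn T cls) {L : ℕ} {ca cb : ℕ → C}
    (ha : ∀ j, 1 ≤ j → j ≤ L + 1 → ca j ∈ T) (hb : ∀ j, 1 ≤ j → j ≤ L + 1 → cb j ∈ T) :
    altSum cls L (fun j => ca j ⊞ cb j) = altSum cls L ca + altSum cls L cb := by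
  rw [altSum, altSum, altSum, ← Finset.sum_add_distrib]
  refine Finset.sum_congr rfl fun i hi => ?_
  have hi := Finset.mem_range.mp hi
  rw [hcls.2 _ _ (ha _ (by omega) (by omega)) (hb _ (by omega) (by omega)), smul_add]

theorem altSum_eq_of_iso (hcls : IsAddOn T cls) (hT0 : (0 : C) ∈ T)
    (hT : ∀ x y, x ∈ T → y ∈ T → (x ⊞ y) ∈ T) :
    ∀ {L : ℕ} {cobj cobj' : ℕ → C} {tw : TriTower L cobj} {tw' : TriTower L cobj'},
      tw.IsPrecoverTower T → tw'.IsPrecoverTower T → (tw.w 0 ≅ tw'.w 0) →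
      altSum cls L cobj = altSum cls L cobj'
  | 0, _, _, tw, tw', h, h', e => by
    simp only [altSum, zero_add, Finset.sum_range_one, pow_zero, one_smul]
    exact hcls.1 _ _ h.top_mem h'.top_mem ⟨eqToIso tw.w_top.symm ≪≫ e ≪≫ eqToIso tw'.w_top⟩
  | L + 1, cobj, cobj', tw, tw', h, h', e => by
    obtain ⟨E⟩ := nonempty_iso_biprod_of_isPrecover (tw.mem 0 (by omega)) (tw'.mem 0 (by omega))
      (h.isPrecover 0 (by omega)) (h'.isPrecover 0 (by omega)) e
    have hs := isPrecoverTower_single L hT0 (h'.mem le_rfl (by omega))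
    have hs' := isPrecoverTower_single L hT0 (h.mem le_rfl (by omega))
    -- Padded by `single` towers on `cobj' 1` and `cobj 1`, the tails have bases related by `E`.
    have key := altSum_eq_of_iso hcls hT0 hT (h.tail.biprod hT hs) (h'.tail.biprod hT hs') E
    rw [altSum_biprod hcls (fun _ => h.tail.mem) (fun _ => hs.mem),
      altSum_biprod hcls (fun _ => h'.tail.mem) (fun _ => hs'.mem),
      altSum_singleObj (hcls.map_zero hT0 hT), altSum_singleObj (hcls.map_zero hT0 hT)] at key
    rw [altSum_succ, altSum_succ, sub_eq_sub_iff_add_eq_add]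
    exact (add_comm _ _).trans (key.symm.trans (add_comm _ _))

lemma IsIndex.exists_isPrecoverTower {ind : C → G} {n : ℕ} (hind : IsIndex (n + 1) T cls ind)
    (c : C) : ∃ (cobj : ℕ → C) (tw : TriTower n cobj),
      tw.w 0 = c ∧ tw.IsPrecoverTower T ∧ ind c = altSum cls n cobj := by
  obtain ⟨cobj, tw, h0, hcov, htop, hsum⟩ := hind c
  exact ⟨cobj, tw, tw.w_zero.trans h0, ⟨fun i hi => (hcov i hi).isPrecover, htop⟩, hsum⟩

end Triangulated

variable {C : Type u} [Category.{v} C]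

theorem stmt7 (k : Type*) [Field k] [Preadditive C] [CategoryTheory.Linear k C] [HasZeroObject C]
    [HasShift C ℤ] [∀ n : ℤ, (shiftFunctor C n).Additive] [Pretriangulated C]
    [HasFiniteBiproducts C] [IsIdempotentComplete C]
    [∀ X Y : C, FiniteDimensional k (X ⟶ Y)]
    (n : ℕ) (hn : 2 ≤ n) (t : C) (ht : IsClusterTiltingObj n t)
    {G : Type*} [AddCommGroup G] (cls ind : C → G)
    (hcls : IsAddOn {x : C | inAdd t x} cls)
    (hind : IsIndex n {x : C | inAdd t x} cls ind)
    (c c' : C) : ind (c ⊞ c') = ind c + ind c' := by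
  obtain ⟨m, rfl⟩ : ∃ m, n = m + 1 := ⟨n - 1, by omega⟩
  have hT0 : inAdd t (0 : C) := inAdd_of_isZero (isZero_zero C)
  have hT : ∀ x y : C, inAdd t x → inAdd t y → inAdd t (x ⊞ y) := fun _ _ => inAdd_biprod
  obtain ⟨_, tw₁, hw₁, h₁, hc⟩ := hind.exists_isPrecoverTower c
  obtain ⟨_, tw₂, hw₂, h₂, hc'⟩ := hind.exists_isPrecoverTower c'
  obtain ⟨_, tw, hw, h, hcc'⟩ := hind.exists_isPrecoverTower (c ⊞ c')
  rw [hc, hc', hcc', ← altSum_biprod hcls (fun _ => h₁.mem) (fun _ => h₂.mem)]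
  refine altSum_eq_of_iso hcls hT0 hT h (h₁.biprod hT h₂) (eqToIso ?_)
  rw [hw]
  exact congrArg₂ (· ⊞ ·) hw₁.symm hw₂.symm
end
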